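/- arXiv:1904.08682 — 4 statements merged into one kernel-verified Lean document; each statement's English description precedes it below -/
import Mathlib

section
/- Let m, n ≥ 1 and let A be an m×m matrix and B an n×n matrix over GF(2), both nonsingular. Then the Kronecker product A⊗B is upper triangular if and only if both A and B are upper triangular. -/
open Matrix

/-- Kronecker product of square matrices over GF(2), with row/column index
pairs ordered lexicographically: `(a, b)` corresponds to index `a * n + b`. -/
noncomputable def kron {m n : ℕ} (A : Matrix (Fin m) (Fin m) (ZMod 2))
    (B : Matrix (Fin n) (Fin n) (ZMod 2)) :
    Matrix (Fin (m * n)) (Fin (m * n)) (ZMod 2) :=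
  Matrix.reindex finProdFinEquiv finProdFinEquiv (Matrix.kroneckerMap (· * ·) A B)

/-- A square matrix is upper triangular if every entry below the diagonal is `0`. -/
def UpperTri {k : ℕ} (M : Matrix (Fin k) (Fin k) (ZMod 2)) : Prop :=
  ∀ i j : Fin k, j < i → M i j = 0

lemma kron_apply' {m n : ℕ} (A : Matrix (Fin m) (Fin m) (ZMod 2))
    (B : Matrix (Fin n) (Fin n) (ZMod 2)) (i1 j1 : Fin m) (i2 j2 : Fin n) :
    kron A B (finProdFinEquiv (i1, i2)) (finProdFinEquiv (j1, j2)) = A i1 j1 * B i2 j2 := by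
  simp [kron, Matrix.kroneckerMap]

lemma exists_row_ne_zero {k : ℕ} (A : Matrix (Fin k) (Fin k) (ZMod 2))
    (hA : IsUnit A) (i : Fin k) : ∃ j, A i j ≠ 0 := by
  by_contra h
  push_neg at h
  have hd : A.det = 0 := Matrix.det_eq_zero_of_row_eq_zero i h
  have := (Matrix.isUnit_iff_isUnit_det A).mp hA
  rw [hd] at this
  exact (not_isUnit_zero : ¬ IsUnit (0 : ZMod 2)) this

theorem kron_upperTri_iff_of_isUnit {m n : ℕ} (hm : 1 ≤ m) (hn : 1 ≤ n)
    (A : Matrix (Fin m) (Fin m) (ZMod 2)) (B : Matrix (Fin n) (Fin n) (ZMod 2))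
    (hA : IsUnit A) (hB : IsUnit B) :
    UpperTri (kron A B) ↔ UpperTri A ∧ UpperTri B := by
  constructor
  · intro h
    constructor
    · -- A upper triangular
      intro i j hij
      obtain ⟨j2, hj2⟩ := exists_row_ne_zero B hB ⟨0, hn⟩
      have hlt : (finProdFinEquiv ((j, j2) : Fin m × Fin n)) <
          (finProdFinEquiv ((i, (⟨0, hn⟩ : Fin n)) : Fin m × Fin n)) := by
        simp only [finProdFinEquiv_apply_val, Fin.lt_iff_val_lt_val]
        have h1 : j.val + 1 ≤ i.val := hij
        have h2 : n * j.val + n ≤ n * i.val := by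
          have := Nat.mul_le_mul_left n h1
          rwa [Nat.mul_add, Nat.mul_one] at this
        have h3 : j2.val < n := j2.isLt
        omega
      have := h _ _ hlt
      rw [kron_apply'] at this
      rcases mul_eq_zero.mp this with h0 | h0
      · exact h0
      · exact absurd h0 hj2
    · -- B upper triangular
      intro i j hij
      have hm1 : m - 1 < m := by omega
      obtain ⟨j1, hj1⟩ := exists_row_ne_zero A hA ⟨m - 1, hm1⟩
      have hlt : (finProdFinEquiv ((j1, j) : Fin m × Fin n)) <
          (finProdFinEquiv (((⟨m - 1, hm1⟩ : Fin m), i) : Fin m × Fin n)) := by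
        simp only [finProdFinEquiv_apply_val, Fin.lt_iff_val_lt_val]
        have h1 : j.val < i.val := hij
        have h2 : j1.val ≤ m - 1 := by omega
        have h3 : n * j1.val ≤ n * (m - 1) := Nat.mul_le_mul_left n h2
        omega
      have := h _ _ hlt
      rw [kron_apply'] at this
      rcases mul_eq_zero.mp this with h0 | h0
      · exact absurd h0 hj1
      · exact h0
  · rintro ⟨hAt, hBt⟩ p q hpq
    obtain ⟨⟨i1, i2⟩, rfl⟩ := finProdFinEquiv.surjective p
    obtain ⟨⟨j1, j2⟩, rfl⟩ := finProdFinEquiv.surjective q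
    rw [kron_apply']
    have hv : j2.val + n * j1.val < i2.val + n * i1.val := by
      simpa [Fin.lt_iff_val_lt_val, finProdFinEquiv_apply_val] using hpq
    rcases lt_trichotomy j1.val i1.val with hc | hc | hc
    · rw [hAt i1 j1 hc, zero_mul]
    · have : j2 < i2 := by
        have : j2.val < i2.val := by rw [hc] at hv; omega
        exact this
      rw [hBt i2 j2 this, mul_zero]
    · exfalso
      have h2 : n * i1.val + n ≤ n * j1.val := by
        have := Nat.mul_le_mul_left n hc
        rwa [Nat.mul_succ] at this
      have := i2.isLt
      omega
end

section
/- If T₁ is a self-dual l₁×l₁ kernel over GF(2) and T₂ is a self-dual l₂×l₂ kernel over GF(2), then their Kronecker product T₁⊗T₂ is a self-dual (l₁l₂)×(l₁l₂) kernel over GF(2). -/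
/-!
A kernel `T` is self-dual exactly when its Gram matrix `T * Tᵀ` vanishes strictly below the
anti-diagonal and is `1` on it. The vanishing gives `C_i ⊆ C_{l-i}^⊥`; the unit anti-diagonal
makes `T * Tᵀ`, hence `T`, invertible, so both sides have dimension `l - i`. Conversely, a zero
at position `(a, b)` of the anti-diagonal would make `g_a` orthogonal to every `g_j` with
`j ≥ b`, which by self-duality puts `g_a` in the span of the rows after it, against the
independence of the rows (they span `C_0 = C_l^⊥`). Since
`(T₁ ⊗ T₂)(T₁ ⊗ T₂)ᵀ = (T₁T₁ᵀ) ⊗ (T₂T₂ᵀ)` and, with lexicographic indexing, the anti-diagonal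
shape is stable under Kronecker products, the theorem follows.
-/

open Matrix

/-- Kernel code `C_i(T)`: the span of rows `i, …, l-1` (0-indexed) of `T`,
i.e. of rows `g_{i+1}, …, g_l` in 1-indexed notation.  For `i = l` this is `{0}`. -/
def kernelCode {l : ℕ} (T : Matrix (Fin l) (Fin l) (ZMod 2)) (i : ℕ) :
    Submodule (ZMod 2) (Fin l → ZMod 2) :=
  Submodule.span (ZMod 2) {v | ∃ j : Fin l, i ≤ (j : ℕ) ∧ v = T j}

/-- The dual (orthogonal complement) of a subspace of `𝔽₂^l` with respect to
the standard dot product. -/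
def dualCode {l : ℕ} (U : Submodule (ZMod 2) (Fin l → ZMod 2)) :
    Submodule (ZMod 2) (Fin l → ZMod 2) where
  carrier := {v | ∀ u ∈ U, ∑ j, u j * v j = 0}
  zero_mem' := by intro u _; simp
  add_mem' := by
    intro a b ha hb u hu
    have : (∑ j, u j * (a + b) j) = (∑ j, u j * a j) + ∑ j, u j * b j := by
      simp [Pi.add_apply, mul_add, Finset.sum_add_distrib]
    rw [this, ha u hu, hb u hu, add_zero]
  smul_mem' := by
    intro c v hv u hu
    have : (∑ j, u j * (c • v) j) = c * ∑ j, u j * v j := by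
      simp [Pi.smul_apply, Finset.mul_sum, mul_left_comm]
    rw [this, hv u hu, mul_zero]

/-- An `l × l` kernel `T` over GF(2) is self-dual if `C_i(T) = C_{l-i}(T)^⊥`
for all `0 ≤ i ≤ l`. -/
def SelfDualKernel {l : ℕ} (T : Matrix (Fin l) (Fin l) (ZMod 2)) : Prop :=
  ∀ i ≤ l, kernelCode T i = dualCode (kernelCode T (l - i))

open scoped Kronecker

theorem le_add_or_le_add_of_mul_le_finProdFinEquiv {m n : ℕ} (x y : Fin m × Fin n)
    (h : m * n ≤ (finProdFinEquiv x : ℕ) + finProdFinEquiv y) :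
    m ≤ x.1 + y.1 ∨ n ≤ x.2 + y.2 := by
  obtain ⟨⟨a, ha⟩, b, hb⟩ := x
  obtain ⟨⟨a', ha'⟩, b', hb'⟩ := y
  simp only [finProdFinEquiv_apply_val] at *
  by_contra! hlt
  nlinarith [Nat.mul_le_mul_left n (show a + a' + 1 ≤ m by omega)]

theorem add_add_one_eq_of_finProdFinEquiv {m n : ℕ} (x y : Fin m × Fin n)
    (h : (finProdFinEquiv x : ℕ) + finProdFinEquiv y + 1 = m * n) :
    x.1 + y.1 + 1 = m ∧ x.2 + y.2 + 1 = n := by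
  obtain ⟨⟨a, ha⟩, b, hb⟩ := x
  obtain ⟨⟨a', ha'⟩, b', hb'⟩ := y
  simp only [finProdFinEquiv_apply_val] at *
  have hlo : a + a' < m := Nat.lt_of_mul_lt_mul_left (a := n) (by nlinarith)
  have hhi : m < a + a' + 2 := Nat.lt_of_mul_lt_mul_left (a := n) (by nlinarith)
  obtain rfl : a + a' + 1 = m := by omega
  exact ⟨rfl, by nlinarith⟩

section AntiUnitriangular

variable {R : Type*} {l : ℕ}

structure IsAntiUnitriangular [Zero R] [One R] (G : Matrix (Fin l) (Fin l) R) : Prop where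
  eq_zero : ∀ a b : Fin l, l ≤ a + b → G a b = 0
  eq_one : ∀ a b : Fin l, a + b + 1 = l → G a b = 1

theorem IsAntiUnitriangular.isUnit_det [CommRing R] {G : Matrix (Fin l) (Fin l) R}
    (hG : IsAntiUnitriangular G) : IsUnit G.det := by
  have hlower : (G.submatrix Fin.revPerm id).IsLowerTriangular := fun a b hab =>
    hG.eq_zero _ _ (by simp at hab ⊢; omega)
  have hdet : (G.submatrix Fin.revPerm id).det = 1 := by
    rw [det_of_isLowerTriangular _ hlower]
    exact Finset.prod_eq_one fun a _ => hG.eq_one _ _ (by simp; omega)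
  rw [det_permute] at hdet
  exact .of_mul_eq_one_right _ hdet

theorem IsAntiUnitriangular.reindex_kronecker [CommSemiring R] {m n : ℕ}
    {G : Matrix (Fin m) (Fin m) R} {H : Matrix (Fin n) (Fin n) R}
    (hG : IsAntiUnitriangular G) (hH : IsAntiUnitriangular H) :
    IsAntiUnitriangular (reindex finProdFinEquiv finProdFinEquiv (G ⊗ₖ H)) := by
  constructor
  all_goals
    intro k k' h
    obtain ⟨x, rfl⟩ := finProdFinEquiv.surjective k
    obtain ⟨y, rfl⟩ := finProdFinEquiv.surjective k'
    simp only [reindex_apply, submatrix_apply, Equiv.symm_apply_apply, kroneckerMap_apply]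
  · rcases le_add_or_le_add_of_mul_le_finProdFinEquiv x y h with hm | hn
    · rw [hG.eq_zero _ _ hm, zero_mul]
    · rw [hH.eq_zero _ _ hn, mul_zero]
  · obtain ⟨hm, hn⟩ := add_add_one_eq_of_finProdFinEquiv x y h
    rw [hG.eq_one _ _ hm, hH.eq_one _ _ hn, one_mul]

end AntiUnitriangular

theorem kron_mul_transpose {m n : ℕ} (A : Matrix (Fin m) (Fin m) (ZMod 2))
    (B : Matrix (Fin n) (Fin n) (ZMod 2)) :
    kron A B * (kron A B)ᵀ = kron (A * Aᵀ) (B * Bᵀ) := by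
  rw [kron, kron, transpose_reindex, ← kroneckerMap_transpose, reindex_apply, reindex_apply,
    submatrix_mul_equiv, ← reindex_apply]
  exact congrArg _ (mul_kronecker_mul A Aᵀ B Bᵀ).symm

section Codes

variable {l : ℕ}

theorem mem_dualCode {U : Submodule (ZMod 2) (Fin l → ZMod 2)} {v : Fin l → ZMod 2} :
    v ∈ dualCode U ↔ ∀ u ∈ U, u ⬝ᵥ v = 0 :=
  Iff.rfl

theorem dualCode_eq_comap_dualAnnihilator (U : Submodule (ZMod 2) (Fin l → ZMod 2)) :
    dualCode U = U.dualAnnihilator.comap (dotProductEquiv (ZMod 2) (Fin l)).toLinearMap := by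
  ext v
  simp [mem_dualCode, Submodule.mem_dualAnnihilator, dotProduct_comm v]

theorem finrank_dualCode (U : Submodule (ZMod 2) (Fin l → ZMod 2)) :
    Module.finrank (ZMod 2) (dualCode U) = l - Module.finrank (ZMod 2) U := by
  have h := Subspace.finrank_add_finrank_dualAnnihilator_eq U
  rw [Module.finrank_fin_fun] at h
  rw [dualCode_eq_comap_dualAnnihilator, Submodule.comap_equiv_eq_map_symm,
    LinearEquiv.finrank_map_eq]
  omega

theorem mem_dualCode_span {S : Set (Fin l → ZMod 2)} {v : Fin l → ZMod 2} :
    v ∈ dualCode (Submodule.span (ZMod 2) S) ↔ ∀ u ∈ S, u ⬝ᵥ v = 0 := by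
  rw [dualCode_eq_comap_dualAnnihilator, Submodule.mem_comap, ← SetLike.mem_coe,
    Submodule.coe_dualAnnihilator_span]
  simp [Set.subset_def, dotProduct_comm v]

theorem dualCode_bot : dualCode (⊥ : Submodule (ZMod 2) (Fin l → ZMod 2)) = ⊤ := by
  ext v
  simp [mem_dualCode]

theorem kernelCode_eq_span_image (T : Matrix (Fin l) (Fin l) (ZMod 2)) (i : ℕ) :
    kernelCode T i = Submodule.span (ZMod 2) (T.row '' {j | i ≤ (j : ℕ)}) := by
  rw [kernelCode]
  congr 1
  ext v
  constructor <;> rintro ⟨j, hj, rfl⟩ <;> exact ⟨j, hj, rfl⟩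

theorem kernelCode_zero (T : Matrix (Fin l) (Fin l) (ZMod 2)) :
    kernelCode T 0 = Submodule.span (ZMod 2) (Set.range T.row) := by
  simp [kernelCode_eq_span_image]

theorem kernelCode_self (T : Matrix (Fin l) (Fin l) (ZMod 2)) : kernelCode T l = ⊥ := by
  simp [kernelCode_eq_span_image]

theorem finrank_kernelCode {T : Matrix (Fin l) (Fin l) (ZMod 2)}
    (hT : LinearIndependent (ZMod 2) T.row) {i : ℕ} (hi : i ≤ l) :
    Module.finrank (ZMod 2) (kernelCode T i) = l - i := by
  rw [kernelCode_eq_span_image, Set.image_eq_range]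
  refine (finrank_span_eq_card (hT.comp _ Subtype.val_injective)).trans ?_
  have h :=
    Finset.card_filter_add_card_filter_not (s := Finset.univ) (fun j : Fin l => (j : ℕ) < i)
  simp only [Fin.card_filter_val_lt, not_lt, Finset.card_univ, Fintype.card_fin] at h
  rw [Fintype.card_subtype]
  simp only [Set.mem_ofPred_eq]
  omega

end Codes

section SelfDual

variable {l : ℕ} {T : Matrix (Fin l) (Fin l) (ZMod 2)}

theorem SelfDualKernel.linearIndependent_row (hT : SelfDualKernel T) :
    LinearIndependent (ZMod 2) T.row := by
  have hspan : Submodule.span (ZMod 2) (Set.range T.row) = ⊤ := by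
    rw [← kernelCode_zero, hT 0 l.zero_le, Nat.sub_zero, kernelCode_self, dualCode_bot]
  exact linearIndependent_of_top_le_span_of_card_eq_finrank hspan.ge (by simp)

theorem SelfDualKernel.dotProduct_eq_zero (hT : SelfDualKernel T) {a b : Fin l}
    (hab : l ≤ a + b) : T a ⬝ᵥ T b = 0 := by
  have ha : T a ∈ dualCode (kernelCode T (l - a)) :=
    hT a a.is_lt.le ▸ Submodule.subset_span ⟨a, le_rfl, rfl⟩
  rw [dotProduct_comm]
  exact mem_dualCode.1 ha _ (Submodule.subset_span ⟨b, by omega, rfl⟩)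

theorem SelfDualKernel.dotProduct_eq_one (hT : SelfDualKernel T) {a b : Fin l}
    (hab : a + b + 1 = l) : T a ⬝ᵥ T b = 1 := by
  by_contra hne
  have h0 : T a ⬝ᵥ T b = 0 := (by decide : ∀ x : ZMod 2, x ≠ 1 → x = 0) _ hne
  have hmem : T a ∈ kernelCode T (a + 1) := by
    rw [hT _ (by omega), kernelCode_eq_span_image, mem_dualCode_span]
    rintro _ ⟨j, hj, rfl⟩
    rcases (show b ≤ j by simp at hj ⊢; omega).eq_or_lt with rfl | hlt
    · rwa [dotProduct_comm]
    · exact hT.dotProduct_eq_zero (by omega)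
  rw [kernelCode_eq_span_image] at hmem
  exact hT.linearIndependent_row.notMem_span_image (by simp) hmem

theorem IsAntiUnitriangular.selfDualKernel (hT : IsAntiUnitriangular (T * Tᵀ)) :
    SelfDualKernel T := by
  have hli : LinearIndependent (ZMod 2) T.row := by
    rw [linearIndependent_rows_iff_isUnit, isUnit_iff_isUnit_det]
    have h := hT.isUnit_det
    rw [det_mul] at h
    exact isUnit_of_mul_isUnit_left h
  intro i hi
  refine Submodule.eq_of_le_of_finrank_le ?_ ?_
  · rw [kernelCode_eq_span_image, Submodule.span_le]
    rintro _ ⟨a, ha, rfl⟩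
    rw [SetLike.mem_coe, kernelCode_eq_span_image, mem_dualCode_span]
    rintro _ ⟨b, hb, rfl⟩
    exact hT.eq_zero b a (by simp at ha hb; omega)
  · rw [finrank_dualCode, finrank_kernelCode hli hi, finrank_kernelCode hli (Nat.sub_le l i)]
    omega

theorem selfDualKernel_iff : SelfDualKernel T ↔ IsAntiUnitriangular (T * Tᵀ) :=
  ⟨fun hT => ⟨fun _ _ => hT.dotProduct_eq_zero, fun _ _ => hT.dotProduct_eq_one⟩,
    IsAntiUnitriangular.selfDualKernel⟩

end SelfDual

theorem selfDualKernel_kron {l₁ l₂ : ℕ}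
    (T₁ : Matrix (Fin l₁) (Fin l₁) (ZMod 2)) (T₂ : Matrix (Fin l₂) (Fin l₂) (ZMod 2))
    (h₁ : SelfDualKernel T₁) (h₂ : SelfDualKernel T₂) :
    SelfDualKernel (kron T₁ T₂) := by
  rw [selfDualKernel_iff, kron_mul_transpose]
  exact (selfDualKernel_iff.1 h₁).reindex_kronecker (selfDualKernel_iff.1 h₂)
end

section
/- Let T_l be any l×l matrix over GF(2) with partial distances d_1,…,d_l, let T₂ = [[1,0],[1,1]], and let T_L = T₂⊗T_l be the 2l×2l block matrix [[T_l,0],[T_l,T_l]] with partial distances D_1,…,D_{2l}. Then D_i = d_i for every 1 ≤ i ≤ l. -/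
open Matrix

/-- The partial distance of row `r` (0-indexed; row `g_{r+1}` in 1-indexed
notation) of `T`: the minimum Hamming distance from that row to the kernel code
spanned by the rows below it, i.e. `d_{r+1}(T) = d_H(g_{r+1}, C_{r+1}(T))`. -/
noncomputable def partialDist {l : ℕ} (T : Matrix (Fin l) (Fin l) (ZMod 2)) (r : Fin l) : ℕ :=
  sInf {d : ℕ | ∃ c ∈ kernelCode T ((r : ℕ) + 1), hammingDist (T r) c = d}

/-- The matrix `T₂ = [[1,0],[1,1]]` over GF(2). -/
def Ttwo : Matrix (Fin 2) (Fin 2) (ZMod 2) := !![1, 0; 1, 1]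

/-!
Index `Fin (2 * l)` by `Fin 2 × Fin l`, so that the rows of `T₂ ⊗ T` are `(g_j, 0) = e₀ ⊗ g_j`
and `(g_j, g_j) = (1, 1) ⊗ g_j`. The embedding `c ↦ (c, 0)` sends `C_i(T)` into `C_i(T₂ ⊗ T)`
and preserves Hamming distance. Conversely the fold `(v, w) ↦ v + w` fixes `(g_i, 0) ↦ g_i`,
kills every row `(g_j, g_j)`, hence sends `C_i(T₂ ⊗ T)` into `C_i(T)`, and does not increase
Hamming distance. So every distance realised on one side is bounded by one realised on the other.
-/

section KroneckerVector

variable {R : Type*} [CommRing R] {m n : ℕ}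

def kronVec (u : Fin m → R) : (Fin n → R) →ₗ[R] (Fin (m * n) → R) where
  toFun v x := u (finProdFinEquiv.symm x).1 * v (finProdFinEquiv.symm x).2
  map_add' v w := by funext x; simp [mul_add]
  map_smul' c v := by funext x; simp [mul_left_comm]

@[simp]
lemma kronVec_apply_finProdFinEquiv (u : Fin m → R) (v : Fin n → R) (a : Fin m)
    (k : Fin n) : kronVec u v (finProdFinEquiv (a, k)) = u a * v k := by
  simp only [kronVec, LinearMap.coe_mk, AddHom.coe_mk, Equiv.symm_apply_apply]

lemma kron_row_finProdFinEquiv (A : Matrix (Fin m) (Fin m) (ZMod 2))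
    (B : Matrix (Fin n) (Fin n) (ZMod 2)) (a : Fin m) (j : Fin n) :
    kron A B (finProdFinEquiv (a, j)) = kronVec (A a) (B j) := by
  funext x
  obtain ⟨⟨b, k⟩, rfl⟩ := finProdFinEquiv.surjective x
  simp [kron]

lemma hammingNorm_kronVec [NoZeroDivisors R] [DecidableEq R] (u : Fin m → R) (v : Fin n → R) :
    hammingNorm (kronVec u v) = hammingNorm u * hammingNorm v := by
  rw [hammingNorm, hammingNorm, hammingNorm, ← Finset.card_product, ← Finset.filter_product,
    Finset.univ_product_univ]
  refine Finset.card_equiv finProdFinEquiv.symm fun x => ?_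
  obtain ⟨⟨a, k⟩, rfl⟩ := finProdFinEquiv.surjective x
  simp

lemma hammingDist_kronVec [NoZeroDivisors R] [DecidableEq R] (u : Fin m → R)
    (v w : Fin n → R) :
    hammingDist (kronVec u v) (kronVec u w) = hammingNorm u * hammingDist v w := by
  rw [hammingDist_eq_hammingNorm, hammingDist_eq_hammingNorm, ← map_neg, ← map_add,
    hammingNorm_kronVec]

def blockSum : (Fin (m * n) → R) →ₗ[R] (Fin n → R) where
  toFun w k := ∑ a, w (finProdFinEquiv (a, k))
  map_add' v w := by funext k; simp [Finset.sum_add_distrib]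
  map_smul' c v := by funext k; simp [Finset.mul_sum]

lemma blockSum_kronVec (u : Fin m → R) (v : Fin n → R) :
    blockSum (kronVec u v) = (∑ a, u a) • v := by
  funext k; simp [blockSum, Finset.sum_mul]

lemma hammingNorm_blockSum_le [DecidableEq R] (w : Fin (m * n) → R) :
    hammingNorm (blockSum w) ≤ hammingNorm w := by
  calc hammingNorm (blockSum w)
      ≤ ((Finset.univ.filter fun x => w x ≠ 0).image fun x => (finProdFinEquiv.symm x).2).card := by
        refine Finset.card_le_card fun k hk => ?_
        have hsum : ∑ a, w (finProdFinEquiv (a, k)) ≠ 0 := (Finset.mem_filter.mp hk).2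
        obtain ⟨a, -, ha⟩ := Finset.exists_ne_zero_of_sum_ne_zero hsum
        exact Finset.mem_image.mpr ⟨_, Finset.mem_filter.mpr ⟨Finset.mem_univ _, ha⟩,
          by rw [Equiv.symm_apply_apply]⟩
    _ ≤ hammingNorm w := Finset.card_image_le

lemma hammingDist_blockSum_le [DecidableEq R] (v w : Fin (m * n) → R) :
    hammingDist (blockSum v) (blockSum w) ≤ hammingDist v w := by
  rw [hammingDist_eq_hammingNorm, hammingDist_eq_hammingNorm, ← map_neg, ← map_add]
  exact hammingNorm_blockSum_le _

end KroneckerVector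

lemma Nat.sInf_image_le_sInf_image {α β : Type*} {f : α → ℕ} {g : β → ℕ} {s : Set α}
    {t : Set β} (hs : s.Nonempty) (h : ∀ a ∈ s, ∃ b ∈ t, g b ≤ f a) :
    sInf (g '' t) ≤ sInf (f '' s) := by
  obtain ⟨a, ha, hfa⟩ := Nat.sInf_mem (hs.image f)
  obtain ⟨b, hb, hle⟩ := h a ha
  rw [← hfa]
  exact (Nat.sInf_le (Set.mem_image_of_mem g hb)).trans hle

section KernelCode

variable {m l : ℕ} (A : Matrix (Fin (m + 1)) (Fin (m + 1)) (ZMod 2))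
  (T : Matrix (Fin l) (Fin l) (ZMod 2))

lemma kernelCode_le_comap_kronVec (i : ℕ) :
    kernelCode T i ≤ (kernelCode (kron A T) i).comap (kronVec (A 0)) := by
  refine Submodule.span_le.mpr ?_
  rintro _ ⟨j, hij, rfl⟩
  rw [SetLike.mem_coe, Submodule.mem_comap, ← kron_row_finProdFinEquiv]
  exact Submodule.subset_span ⟨_, by simpa using hij, rfl⟩

lemma kernelCode_kron_le_comap_blockSum (hA : ∀ a ≠ 0, ∑ b, A a b = 0) (i : ℕ) :
    kernelCode (kron A T) i ≤ (kernelCode T i).comap blockSum := by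
  refine Submodule.span_le.mpr ?_
  rintro _ ⟨x, hix, rfl⟩
  obtain ⟨⟨a, j⟩, rfl⟩ := finProdFinEquiv.surjective x
  rw [SetLike.mem_coe, Submodule.mem_comap, kron_row_finProdFinEquiv, blockSum_kronVec]
  by_cases ha : a = 0
  · subst ha
    exact Submodule.smul_mem _ _ (Submodule.subset_span ⟨j, by simpa using hix, rfl⟩)
  · rw [hA a ha, zero_smul]
    exact Submodule.zero_mem _

theorem partialDist_kron_finProdFinEquiv_zero (hA₀ : hammingNorm (A 0) = 1)
    (hA₀sum : ∑ b, A 0 b = 1) (hA : ∀ a ≠ 0, ∑ b, A a b = 0) (i : Fin l) :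
    partialDist (kron A T) (finProdFinEquiv (0, i)) = partialDist T i := by
  have hidx : ((finProdFinEquiv (0, i) : Fin ((m + 1) * l)) : ℕ) = i := by simp
  unfold partialDist
  rw [kron_row_finProdFinEquiv, hidx]
  apply le_antisymm
  · refine Nat.sInf_image_le_sInf_image ⟨0, Submodule.zero_mem _⟩ fun c hc => ?_
    refine ⟨kronVec (A 0) c, kernelCode_le_comap_kronVec A T _ hc, ?_⟩
    rw [hammingDist_kronVec, hA₀, one_mul]
  · refine Nat.sInf_image_le_sInf_image ⟨0, Submodule.zero_mem _⟩ fun w hw => ?_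
    refine ⟨blockSum w, kernelCode_kron_le_comap_blockSum A T hA _ hw, ?_⟩
    calc hammingDist (T i) (blockSum w)
        = hammingDist (blockSum (kronVec (A 0) (T i))) (blockSum w) := by
          rw [blockSum_kronVec, hA₀sum, one_smul]
      _ ≤ hammingDist (kronVec (A 0) (T i)) w := hammingDist_blockSum_le _ _

end KernelCode

theorem partialDist_kron_upperHalf {l : ℕ} (T : Matrix (Fin l) (Fin l) (ZMod 2)) (i : Fin l) :
    partialDist (kron Ttwo T) ⟨(i : ℕ), by have := i.isLt; omega⟩ = partialDist T i := by
  have hidx : (⟨i, by omega⟩ : Fin (2 * l)) = finProdFinEquiv ((0 : Fin 2), i) := by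
    ext; simp
  rw [hidx]
  exact partialDist_kron_finProdFinEquiv_zero Ttwo T (by decide) (by decide) (by decide) i
end

section
/- Let T_l be any l×l matrix over GF(2) with partial distances d_1,…,d_l, let T₂ = [[1,0],[1,1]], and let T_L = T₂⊗T_l be the 2l×2l block matrix [[T_l,0],[T_l,T_l]] with partial distances D_1,…,D_{2l}. Then D_{l+i} = 2·d_i for every 1 ≤ i ≤ l. -/
open Matrix

/-- The "doubling" linear map `x ↦ (x, x)` in kron coordinates. -/
def dbl (l : ℕ) : (Fin l → ZMod 2) →ₗ[ZMod 2] (Fin (2 * l) → ZMod 2) where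
  toFun x := fun k => x (finProdFinEquiv.symm k).2
  map_add' _ _ := rfl
  map_smul' _ _ := rfl

lemma Ttwo_one (a : Fin 2) : Ttwo 1 a = 1 := by
  fin_cases a <;> simp [Ttwo]

lemma kron_row {l : ℕ} (T : Matrix (Fin l) (Fin l) (ZMod 2)) (b : Fin l) :
    kron Ttwo T (finProdFinEquiv (1, b)) = dbl l (T b) := by
  funext k
  simp only [kron, Matrix.reindex_apply, Matrix.submatrix_apply, Equiv.symm_apply_apply,
    Matrix.kroneckerMap_apply, dbl, LinearMap.coe_mk, AddHom.coe_mk]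
  rw [Ttwo_one, one_mul]

lemma dbl_hammingDist {l : ℕ} (x y : Fin l → ZMod 2) :
    hammingDist (dbl l x) (dbl l y) = 2 * hammingDist x y := by
  classical
  unfold hammingDist
  have h1 : (Finset.univ.filter fun k : Fin (2 * l) => dbl l x k ≠ dbl l y k).card
      = (Finset.univ.filter fun p : Fin 2 × Fin l => x p.2 ≠ y p.2).card := by
    refine (Finset.card_equiv finProdFinEquiv.symm fun k => ?_).symm.symm
    simp [dbl]
  rw [h1]
  have h2 : (Finset.univ.filter fun p : Fin 2 × Fin l => x p.2 ≠ y p.2)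
      = Finset.univ ×ˢ (Finset.univ.filter fun b => x b ≠ y b) := by
    ext p
    simp
  rw [h2, Finset.card_product]
  simp [two_mul]

lemma kernelCode_kron {l : ℕ} (T : Matrix (Fin l) (Fin l) (ZMod 2)) (i : ℕ) :
    kernelCode (kron Ttwo T) (l + i) = (kernelCode T i).map (dbl l) := by
  unfold kernelCode
  rw [← Submodule.span_image]
  congr 1
  ext v
  constructor
  · rintro ⟨j, hj, rfl⟩
    obtain ⟨⟨a, b⟩, rfl⟩ := finProdFinEquiv.surjective j
    have hval : ((finProdFinEquiv (a, b) : Fin (2 * l)) : ℕ) = b + l * a := by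
      simp
    have ha2 : (a : ℕ) < 2 := a.isLt
    have hb : (b : ℕ) < l := b.isLt
    rw [hval] at hj
    have ha1 : a = 1 := by
      fin_cases a
      · exfalso; simp at hj; omega
      · rfl
    subst ha1
    rw [Fin.val_one, mul_one] at hj
    exact ⟨T b, ⟨b, by omega, rfl⟩, (kron_row T b).symm⟩
  · rintro ⟨_, ⟨b, hb, rfl⟩, rfl⟩
    refine ⟨finProdFinEquiv (1, b), ?_, (kron_row T b).symm⟩
    have hval : ((finProdFinEquiv ((1 : Fin 2), b) : Fin (2 * l)) : ℕ) = b + l * 1 := by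
      simp [Fin.val_one]
    omega

theorem partialDist_kron_lowerHalf {l : ℕ} (T : Matrix (Fin l) (Fin l) (ZMod 2)) (i : Fin l) :
    partialDist (kron Ttwo T) ⟨l + (i : ℕ), by have := i.isLt; omega⟩ = 2 * partialDist T i := by
  classical
  unfold partialDist
  have hrow : kron Ttwo T ⟨l + (i : ℕ), by have := i.isLt; omega⟩ = dbl l (T i) := by
    have : (⟨l + (i : ℕ), by have := i.isLt; omega⟩ : Fin (2 * l)) = finProdFinEquiv (1, i) := by
      apply Fin.ext
      simp only [finProdFinEquiv_apply_val, Fin.val_one, mul_one]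
      omega
    rw [this, kron_row]
  have hker : kernelCode (kron Ttwo T) ((l + (i : ℕ)) + 1)
      = (kernelCode T ((i : ℕ) + 1)).map (dbl l) := by
    exact kernelCode_kron T ((i : ℕ) + 1)
  simp only [hrow, hker]
  have hsets : {d : ℕ | ∃ c ∈ (kernelCode T ((i : ℕ) + 1)).map (dbl l),
      hammingDist (dbl l (T i)) c = d}
      = (fun d => 2 * d) '' {d : ℕ | ∃ c ∈ kernelCode T ((i : ℕ) + 1), hammingDist (T i) c = d} := by
    ext d
    constructor
    · rintro ⟨c, hc, rfl⟩
      obtain ⟨c₀, hc₀, rfl⟩ := hc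
      exact ⟨hammingDist (T i) c₀, ⟨c₀, hc₀, rfl⟩, (dbl_hammingDist _ _).symm⟩
    · rintro ⟨d₀, ⟨c₀, hc₀, rfl⟩, rfl⟩
      exact ⟨dbl l c₀, Submodule.mem_map_of_mem hc₀, dbl_hammingDist _ _⟩
  rw [hsets]
  set S := {d : ℕ | ∃ c ∈ kernelCode T ((i : ℕ) + 1), hammingDist (T i) c = d}
  have hne : S.Nonempty := ⟨_, 0, Submodule.zero_mem _, rfl⟩
  have hmem := Nat.sInf_mem hne
  apply le_antisymm
  · exact Nat.sInf_le ⟨sInf S, hmem, rfl⟩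
  · obtain ⟨d₀, hd₀, heq⟩ := Nat.sInf_mem (hne.image _)
    rw [← heq]
    exact Nat.mul_le_mul_left 2 (Nat.sInf_le hd₀)
end
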